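/- Let σ > 0 and define g : ℝ → ℝ by g(a) = D( N(0,σ²) ‖ (1/2)·N(−a,σ²) + (1/2)·N(a,σ²) ). Then the derivatives of g at a = 0 of orders 0 through 3 all vanish, and the fourth derivative satisfies g⁗(0) = 6/σ⁴ (so the fourth-order Taylor term of g at 0 is a⁴/(4σ⁴)). -/

import Mathlib

/-!
Against `N(0, v)`, `v = σ²`, the mixture `½ N(-a, v) + ½ N(a, v)` has density ratio
`exp (-a² / 2v) · cosh (a x / v)`, so `g a = a² / 2v - E log cosh (a x / v)`. Substituting
`y = x / v ~ N(0, 1 / v)` and using `E y² = 1 / v` gives `g a = E φ (a y)` with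
`φ t = t² / 2 - log cosh t`. The derivatives of `φ` grow at most quadratically and Gaussian moments
are finite, so differentiating under the integral gives `g⁽ᵏ⁾ 0 = φ⁽ᵏ⁾ 0 · E yᵏ`. Finally
`φ 0 = φ' 0 = φ'' 0 = φ''' 0 = 0`, `φ'''' 0 = 2` and `E y⁴ = 3 / v²`.
-/

open MeasureTheory ProbabilityTheory Real
open scoped ENNReal NNReal

/-- The Kullback–Leibler divergence `D(P‖Q) = ∫ log(dP/dQ) dP`
(for `P ≪ Q` this equals `∫ p(x) ln(p(x)/q(x)) dx` where `p, q` are densities). -/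
noncomputable def klDiv {α : Type*} [MeasurableSpace α] (P Q : Measure α) : ℝ :=
  ∫ x, Real.log ((P.rnDeriv Q) x).toReal ∂P

/-- `g(a) = D(N(0,σ²) ‖ (1/2)·N(−a,σ²) + (1/2)·N(a,σ²))`, the Kullback–Leibler
divergence between the centered Gaussian and the equal mixture of two
Gaussians with means `∓a` and variance `σ²`. -/
noncomputable def klMix (σ : ℝ) : ℝ → ℝ := fun a =>
  klDiv (gaussianReal 0 (σ ^ 2).toNNReal)
    ((1 / 2 : ℝ≥0∞) • gaussianReal (-a) (σ ^ 2).toNNReal +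
      (1 / 2 : ℝ≥0∞) • gaussianReal a (σ ^ 2).toNNReal)

theorem Real.hasDerivAt_tanh (t : ℝ) : HasDerivAt tanh (1 - tanh t ^ 2) t := by
  rw [show tanh = fun s => sinh s / cosh s from funext tanh_eq_sinh_div_cosh]
  refine ((hasDerivAt_sinh t).div (hasDerivAt_cosh t) (cosh_pos t).ne').congr_deriv ?_
  field_simp

theorem iteratedDeriv_eq_of_hasDerivAt_succ {𝕜 E : Type*} [NontriviallyNormedField 𝕜]
    [NormedAddCommGroup E] [NormedSpace 𝕜 E] {F : ℕ → 𝕜 → E} {N : ℕ}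
    (hF : ∀ k < N, ∀ x, HasDerivAt (F k) (F (k + 1) x) x) :
    ∀ k ≤ N, iteratedDeriv k (F 0) = F k
  | 0, _ => iteratedDeriv_zero
  | k + 1, hk => by
    rw [iteratedDeriv_succ, iteratedDeriv_eq_of_hasDerivAt_succ hF k (by omega)]
    exact funext fun x => (hF k hk x).deriv

section ParametricIntegral

variable {μ : Measure ℝ} {f f' : ℝ → ℝ} {C : ℝ}

theorem abs_pow_mul_comp_mul_le (hf : ∀ t, |f t| ≤ C * (1 + t ^ 2)) {b R : ℝ} (hb : |b| ≤ R)
    (n : ℕ) (x : ℝ) : |x ^ n * f (b * x)| ≤ C * (|x| ^ n + R ^ 2 * |x| ^ (n + 2)) := by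
  have hC : 0 ≤ C := nonneg_of_mul_nonneg_left ((abs_nonneg _).trans (hf 0)) (by positivity)
  have hbx : (b * x) ^ 2 ≤ R ^ 2 * |x| ^ 2 := by
    rw [mul_pow, sq_abs]
    exact mul_le_mul_of_nonneg_right (sq_le_sq' (abs_le.1 hb).1 (abs_le.1 hb).2) (sq_nonneg x)
  calc |x ^ n * f (b * x)| = |x| ^ n * |f (b * x)| := by rw [abs_mul, abs_pow]
    _ ≤ |x| ^ n * (C * (1 + R ^ 2 * |x| ^ 2)) := by
      gcongr
      exact (hf _).trans (by gcongr)
    _ = C * (|x| ^ n + R ^ 2 * |x| ^ (n + 2)) := by ring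

theorem integrable_pow_mul_comp_mul (hmom : ∀ k, Integrable (fun x => |x| ^ k) μ)
    (hcont : Continuous f) (hf : ∀ t, |f t| ≤ C * (1 + t ^ 2)) (n : ℕ) (a : ℝ) :
    Integrable (fun x => x ^ n * f (a * x)) μ :=
  (((hmom n).add ((hmom (n + 2)).const_mul _)).const_mul C).mono'
    (by fun_prop) (ae_of_all _ (abs_pow_mul_comp_mul_le hf le_rfl n))

theorem hasDerivAt_integral_pow_mul_comp_mul (hmom : ∀ k, Integrable (fun x => |x| ^ k) μ)
    (hderiv : ∀ t, HasDerivAt f (f' t) t) (hcont' : Continuous f')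
    (hf : ∀ t, |f t| ≤ C * (1 + t ^ 2)) (hf' : ∀ t, |f' t| ≤ C * (1 + t ^ 2)) (n : ℕ) (a : ℝ) :
    HasDerivAt (fun b => ∫ x, x ^ n * f (b * x) ∂μ) (∫ x, x ^ (n + 1) * f' (a * x) ∂μ) a := by
  have hcont : Continuous f :=
    Differentiable.continuous fun t => (hderiv t).differentiableAt
  have hball : ∀ b ∈ Metric.ball a 1, |b| ≤ |a| + 1 := fun b hb => by
    have := abs_sub_abs_le_abs_sub b a
    rw [Metric.mem_ball, Real.dist_eq] at hb
    linarith
  refine (hasDerivAt_integral_of_dominated_loc_of_deriv_le (Metric.ball_mem_nhds a one_pos)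
    (Filter.Eventually.of_forall fun b => (integrable_pow_mul_comp_mul hmom hcont hf n b).1)
    (integrable_pow_mul_comp_mul hmom hcont hf n a)
    (integrable_pow_mul_comp_mul hmom hcont' hf' (n + 1) a).1
    (ae_of_all _ fun x b hb => abs_pow_mul_comp_mul_le hf' (hball b hb) (n + 1) x)
    (((hmom (n + 1)).add ((hmom (n + 3)).const_mul _)).const_mul C)
    (ae_of_all _ fun x b _ => ?_)).2
  simpa [pow_succ, mul_assoc, mul_comm x] using
    ((hderiv (b * x)).comp b ((hasDerivAt_id b).mul_const x)).const_mul (x ^ n)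

theorem iteratedDeriv_integral_comp_mul (hmom : ∀ k, Integrable (fun x => |x| ^ k) μ)
    {Φ : ℕ → ℝ → ℝ} {N : ℕ} (hderiv : ∀ k < N, ∀ t, HasDerivAt (Φ k) (Φ (k + 1) t) t)
    (hcont : Continuous (Φ N)) (hΦ : ∀ k ≤ N, ∀ t, |Φ k t| ≤ C * (1 + t ^ 2))
    {k : ℕ} (hk : k ≤ N) (a : ℝ) :
    iteratedDeriv k (fun b => ∫ x, Φ 0 (b * x) ∂μ) a = ∫ x, x ^ k * Φ k (a * x) ∂μ := by
  have hcont' : ∀ k ≤ N, Continuous (Φ k) := fun k hk => by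
    rcases hk.lt_or_eq with hk | rfl
    · exact Differentiable.continuous fun t => (hderiv k hk t).differentiableAt
    · exact hcont
  have hchain := iteratedDeriv_eq_of_hasDerivAt_succ (N := N)
    (F := fun k b => ∫ x, x ^ k * Φ k (b * x) ∂μ) fun k hk b =>
      hasDerivAt_integral_pow_mul_comp_mul hmom (hderiv k hk) (hcont' (k + 1) hk)
        (hΦ k hk.le) (hΦ (k + 1) hk) k b
  simpa using congrFun (hchain k hk) a

end ParametricIntegral

section GaussianMoments

open Polynomial in
theorem iteratedDeriv_eval_mul_exp_mul_sq (c : ℝ) (n : ℕ) (P : ℝ[X]) :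
    iteratedDeriv n (fun t => P.eval t * rexp (c * t ^ 2 / 2))
      = fun t => ((fun Q => derivative Q + C c * X * Q)^[n] P).eval t * rexp (c * t ^ 2 / 2) := by
  induction n generalizing P with
  | zero => rfl
  | succ n ih =>
    rw [iteratedDeriv_succ', Function.iterate_succ_apply, ← ih]
    congr 1
    funext t
    refine ((P.hasDerivAt t).mul (((hasDerivAt_pow 2 t).const_mul c).div_const 2).exp).deriv.trans ?_
    simp only [eval_add, eval_mul, eval_C, eval_X, Nat.cast_ofNat]
    ring

variable (v : ℝ≥0)

theorem integrable_abs_pow_gaussianReal (m : ℝ) (k : ℕ) :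
    Integrable (fun x => |x| ^ k) (gaussianReal m v) :=
  (memLp_id_gaussianReal k).integrable_norm_pow'

theorem integral_sq_gaussianReal : ∫ x, x ^ 2 ∂gaussianReal 0 v = v := by
  simpa [variance_eq_integral measurable_id'.aemeasurable] using
    variance_fun_id_gaussianReal (μ := 0) (v := v)

theorem integral_pow_four_gaussianReal : ∫ x, x ^ 4 ∂gaussianReal 0 v = 3 * v ^ 2 := by
  have hmgf : mgf (fun x => x) (gaussianReal 0 v)
      = fun t => (1 : Polynomial ℝ).eval t * rexp (v * t ^ 2 / 2) := by
    simp [mgf_fun_id_gaussianReal]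
  have := iteratedDeriv_mgf_zero (X := fun x => x) (μ := gaussianReal 0 v) (by simp) 4
  rw [hmgf, iteratedDeriv_eval_mul_exp_mul_sq] at this
  simp [Function.iterate_succ_apply', Polynomial.derivative_mul] at this
  linear_combination -this

end GaussianMoments

-- Meaningful for `k ≤ 4` only: the last clause is the fourth derivative.
noncomputable def halfSqSubLogCoshDeriv : ℕ → ℝ → ℝ
  | 0 => fun t => t ^ 2 / 2 - log (cosh t)
  | 1 => fun t => t - tanh t
  | 2 => fun t => tanh t ^ 2
  | 3 => fun t => 2 * tanh t * (1 - tanh t ^ 2)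
  | _ => fun t => 2 * (1 - tanh t ^ 2) * (1 - 3 * tanh t ^ 2)

theorem hasDerivAt_halfSqSubLogCoshDeriv {k : ℕ} (hk : k < 4) (t : ℝ) :
    HasDerivAt (halfSqSubLogCoshDeriv k) (halfSqSubLogCoshDeriv (k + 1) t) t := by
  have htanh := hasDerivAt_tanh t
  interval_cases k
  · show HasDerivAt (fun t => t ^ 2 / 2 - log (cosh t)) (t - tanh t) t
    refine (((hasDerivAt_pow 2 t).div_const 2).sub
      ((hasDerivAt_cosh t).log (cosh_pos t).ne')).congr_deriv ?_
    simp [tanh_eq_sinh_div_cosh]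
  · show HasDerivAt (fun t => t - tanh t) (tanh t ^ 2) t
    exact ((hasDerivAt_id t).sub htanh).congr_deriv (by simp)
  · show HasDerivAt (fun t => tanh t ^ 2) (2 * tanh t * (1 - tanh t ^ 2)) t
    exact (htanh.pow 2).congr_deriv (by simp)
  · show HasDerivAt (fun t => 2 * tanh t * (1 - tanh t ^ 2))
      (2 * (1 - tanh t ^ 2) * (1 - 3 * tanh t ^ 2)) t
    exact ((htanh.const_mul 2).mul ((htanh.pow 2).const_sub 1)).congr_deriv (by simp; ring)

theorem continuous_halfSqSubLogCoshDeriv (k : ℕ) : Continuous (halfSqSubLogCoshDeriv k) := by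
  have hcosh : Continuous fun t => log (cosh t) :=
    continuous_cosh.log fun t => (cosh_pos t).ne'
  have htanh : Continuous tanh :=
    Differentiable.continuous fun t => (hasDerivAt_tanh t).differentiableAt
  match k with
  | 0 => exact (continuous_pow 2 |>.div_const 2).sub hcosh
  | 1 | 2 | 3 | _ + 4 => simp only [halfSqSubLogCoshDeriv]; fun_prop

theorem abs_halfSqSubLogCoshDeriv_le (k : ℕ) (t : ℝ) :
    |halfSqSubLogCoshDeriv k t| ≤ 4 * (1 + t ^ 2) := by
  have h₀ := abs_tanh_lt_one t
  have h₁ : tanh t ^ 2 ≤ 1 := (tanh_sq_lt_one t).le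
  have h₂ := sq_nonneg (tanh t)
  match k with
  | 0 =>
    have hlow : 0 ≤ log (cosh t) := log_nonneg (one_le_cosh t)
    have hup : log (cosh t) ≤ t ^ 2 / 2 :=
      (log_le_iff_le_exp (cosh_pos t)).2 (cosh_le_exp_half_sq t)
    simp only [halfSqSubLogCoshDeriv]
    rw [abs_le]; constructor <;> nlinarith
  | 1 =>
    calc |t - tanh t| ≤ |t| + |tanh t| := abs_sub _ _
      _ ≤ 4 * (1 + t ^ 2) := by nlinarith [sq_abs t, sq_nonneg (|t| - 1)]
  | 2 => simp only [halfSqSubLogCoshDeriv]; rw [abs_le]; constructor <;> nlinarith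
  | 3 =>
    simp only [halfSqSubLogCoshDeriv]
    rw [abs_le]; constructor <;> nlinarith [abs_le.1 h₀.le]
  | _ + 4 => simp only [halfSqSubLogCoshDeriv]; rw [abs_le]; constructor <;> nlinarith

theorem klDiv_eq_integral_log_div {α : Type*} [MeasurableSpace α] {ν P Q : Measure α}
    [SigmaFinite ν] {p q : α → ℝ} (hP : P = ν.withDensity fun x => ENNReal.ofReal (p x))
    (hQ : Q = ν.withDensity fun x => ENNReal.ofReal (q x)) (hp : Measurable p)
    (hq : Measurable q) (hp0 : ∀ x, 0 ≤ p x) (hq0 : ∀ x, 0 < q x) :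
    klDiv P Q = ∫ x, log (p x / q x) ∂P := by
  subst hP hQ
  have : SigmaFinite (ν.withDensity fun x => ENNReal.ofReal (p x)) :=
    SigmaFinite.withDensity_of_ne_top (ae_of_all _ fun _ => ENNReal.ofReal_ne_top)
  have hPQ := Measure.rnDeriv_withDensity_right (ν.withDensity fun x => ENNReal.ofReal (p x)) ν
    hq.ennreal_ofReal.aemeasurable (ae_of_all _ fun x => (ENNReal.ofReal_pos.2 (hq0 x)).ne')
    (ae_of_all _ fun _ => ENNReal.ofReal_ne_top)
  have hPν := Measure.rnDeriv_withDensity ν hp.ennreal_ofReal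
  refine integral_congr_ae ((withDensity_absolutelyContinuous ν _).ae_le ?_)
  filter_upwards [hPQ, hPν] with x hPQ hPν
  rw [hPQ, hPν, ENNReal.toReal_mul, ENNReal.toReal_inv, ENNReal.toReal_ofReal (hq0 x).le,
    ENNReal.toReal_ofReal (hp0 x), inv_mul_eq_div]

theorem gaussianPDFReal_eq_mul_exp (m : ℝ) (v : ℝ≥0) (x : ℝ) :
    gaussianPDFReal m v x = gaussianPDFReal 0 v x * rexp ((m * x - m ^ 2 / 2) / v) := by
  simp only [gaussianPDFReal, mul_assoc, ← exp_add]
  ring_nf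

theorem gaussianPDFReal_mix_eq_mul_cosh (a : ℝ) (v : ℝ≥0) (x : ℝ) :
    (gaussianPDFReal (-a) v x + gaussianPDFReal a v x) / 2
      = gaussianPDFReal 0 v x * (rexp (-(a ^ 2 / (2 * v))) * cosh (a * x / v)) := by
  have h₁ : rexp ((-a * x - (-a) ^ 2 / 2) / v)
      = rexp (-(a ^ 2 / (2 * v))) * rexp (-(a * x / v)) := by
    rw [← exp_add]; ring_nf
  have h₂ : rexp ((a * x - a ^ 2 / 2) / v) = rexp (-(a ^ 2 / (2 * v))) * rexp (a * x / v) := by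
    rw [← exp_add]; ring_nf
  rw [gaussianPDFReal_eq_mul_exp (-a), gaussianPDFReal_eq_mul_exp a, cosh_eq, h₁, h₂]
  ring

theorem gaussianReal_mix_eq_withDensity (a : ℝ) {v : ℝ≥0} (hv : v ≠ 0) :
    (1 / 2 : ℝ≥0∞) • gaussianReal (-a) v + (1 / 2 : ℝ≥0∞) • gaussianReal a v
      = volume.withDensity fun x =>
          ENNReal.ofReal ((gaussianPDFReal (-a) v x + gaussianPDFReal a v x) / 2) := by
  rw [gaussianReal_of_var_ne_zero _ hv, gaussianReal_of_var_ne_zero _ hv,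
    ← withDensity_smul _ (measurable_gaussianPDF _ _),
    ← withDensity_smul _ (measurable_gaussianPDF _ _),
    ← withDensity_add_left ((measurable_gaussianPDF _ _).const_smul _)]
  congr 1
  funext x
  simp only [Pi.add_apply, Pi.smul_apply, smul_eq_mul, gaussianPDF]
  rw [add_div, ENNReal.ofReal_add (div_nonneg (gaussianPDFReal_nonneg _ _ _) zero_le_two)
    (div_nonneg (gaussianPDFReal_nonneg _ _ _) zero_le_two)]
  simp [ENNReal.ofReal_div_of_pos, ENNReal.div_eq_inv_mul]

theorem klDiv_gaussianReal_mix_eq_integral_log_cosh (a : ℝ) {v : ℝ≥0} (hv : v ≠ 0) :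
    klDiv (gaussianReal 0 v)
        ((1 / 2 : ℝ≥0∞) • gaussianReal (-a) v + (1 / 2 : ℝ≥0∞) • gaussianReal a v)
      = ∫ x, (a ^ 2 / (2 * v) - log (cosh (a * x / v))) ∂gaussianReal 0 v := by
  rw [klDiv_eq_integral_log_div (gaussianReal_of_var_ne_zero 0 hv)
    (gaussianReal_mix_eq_withDensity a hv) (measurable_gaussianPDFReal 0 v)
    (by fun_prop) (gaussianPDFReal_nonneg 0 v) fun x => by
      rw [gaussianPDFReal_mix_eq_mul_cosh]; have := gaussianPDFReal_pos 0 v x hv; positivity]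
  congr 1
  funext x
  have hp := (gaussianPDFReal_pos 0 v x hv).ne'
  rw [gaussianPDFReal_mix_eq_mul_cosh, div_mul_cancel_left₀ hp, log_inv,
    log_mul (exp_pos _).ne' (cosh_pos _).ne', log_exp]
  ring

theorem klDiv_gaussianReal_mix_eq_integral_halfSqSubLogCosh (a : ℝ) {v : ℝ≥0} (hv : v ≠ 0) :
    klDiv (gaussianReal 0 v)
        ((1 / 2 : ℝ≥0∞) • gaussianReal (-a) v + (1 / 2 : ℝ≥0∞) • gaussianReal a v)
      = ∫ y, halfSqSubLogCoshDeriv 0 (a * y) ∂gaussianReal 0 v⁻¹ := by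
  have hmap : (gaussianReal 0 v).map (· / (v : ℝ)) = gaussianReal 0 v⁻¹ := by
    rw [gaussianReal_map_div_const, zero_div]
    congr 1
    ext
    simp [sq]
  have hkernel : Integrable (fun y => halfSqSubLogCoshDeriv 0 (a * y)) (gaussianReal 0 v⁻¹) := by
    simpa using integrable_pow_mul_comp_mul (integrable_abs_pow_gaussianReal _ 0)
      (continuous_halfSqSubLogCoshDeriv 0) (abs_halfSqSubLogCoshDeriv_le 0) 0 a
  have hsq : Integrable (fun y : ℝ => y ^ 2) (gaussianReal 0 v⁻¹) :=
    (integrable_abs_pow_gaussianReal v⁻¹ 0 2).congr (ae_of_all _ fun y => sq_abs y)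
  have hquad : Integrable (fun y => a ^ 2 / 2 * ((v : ℝ)⁻¹ - y ^ 2)) (gaussianReal 0 v⁻¹) :=
    ((integrable_const _).sub hsq).const_mul _
  calc _ = ∫ x, (a ^ 2 / (2 * v) - log (cosh (a * x / v))) ∂gaussianReal 0 v :=
        klDiv_gaussianReal_mix_eq_integral_log_cosh a hv
    _ = ∫ y, (a ^ 2 / (2 * v) - log (cosh (a * y))) ∂gaussianReal 0 v⁻¹ := by
        rw [← hmap, integral_map (by fun_prop) (Measurable.aestronglyMeasurable (by fun_prop))]
        simp only [mul_div_assoc]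
    _ = ∫ y, (halfSqSubLogCoshDeriv 0 (a * y) + a ^ 2 / 2 * ((v : ℝ)⁻¹ - y ^ 2))
          ∂gaussianReal 0 v⁻¹ := by
        congr 1; funext y
        simp only [halfSqSubLogCoshDeriv]
        ring
    _ = _ := by
        rw [integral_add hkernel hquad, integral_const_mul,
          integral_sub (integrable_const _) hsq, integral_sq_gaussianReal]
        simp

/-- For `σ > 0`, the derivatives at `a = 0` of
`g(a) = D(N(0,σ²) ‖ (1/2)·N(−a,σ²) + (1/2)·N(a,σ²))` of orders `0` through `3`
all vanish, and the fourth derivative satisfies `g⁗(0) = 6/σ⁴` (so the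
fourth-order Taylor term of `g` at `0` is `a⁴/(4σ⁴)`). -/
theorem stmt_7 (σ : ℝ) (hσ : 0 < σ) :
    iteratedDeriv 0 (klMix σ) 0 = 0 ∧
    iteratedDeriv 1 (klMix σ) 0 = 0 ∧
    iteratedDeriv 2 (klMix σ) 0 = 0 ∧
    iteratedDeriv 3 (klMix σ) 0 = 0 ∧
    iteratedDeriv 4 (klMix σ) 0 = 6 / σ ^ 4 := by
  have hv : (σ ^ 2).toNNReal ≠ 0 := by simp [hσ.ne']
  set ν := gaussianReal 0 (σ ^ 2).toNNReal⁻¹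
  have hg : klMix σ = fun a => ∫ y, halfSqSubLogCoshDeriv 0 (a * y) ∂ν :=
    funext fun a => klDiv_gaussianReal_mix_eq_integral_halfSqSubLogCosh a hv
  have hderiv : ∀ k ≤ 4,
      iteratedDeriv k (klMix σ) 0 = halfSqSubLogCoshDeriv k 0 * ∫ y, y ^ k ∂ν := fun k hk => by
    rw [hg, iteratedDeriv_integral_comp_mul (integrable_abs_pow_gaussianReal _ 0)
      (fun _ => hasDerivAt_halfSqSubLogCoshDeriv) (continuous_halfSqSubLogCoshDeriv 4)
      (fun k _ => abs_halfSqSubLogCoshDeriv_le k) hk]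
    simp only [zero_mul, integral_mul_const]
    ring
  have hmoment : ∫ y, y ^ 4 ∂ν = 3 / σ ^ 4 := by
    rw [integral_pow_four_gaussianReal]
    simp [hσ.le]
    ring
  refine ⟨?_, ?_, ?_, ?_, ?_⟩ <;> rw [hderiv _ (by norm_num)] <;>
    norm_num [halfSqSubLogCoshDeriv, hmoment, mul_div_assoc']
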